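/- arXiv:2409.20383 — 2 statements merged into one kernel-verified Lean document; each statement's English description precedes it below -/
import Mathlib

section
/- For n ≥ 1 define ρ_n : [0,1] → ℝ by ρ_n(r) = 1 for r ≤ r_n = 1 − 1/n and ρ_n(r) = (1−r)(n³(r−r_n)² + n²(r−r_n) + n) for r > r_n. Then ρ_n is twice continuously differentiable on [0,1), continuous on [0,1], satisfies ρ_n(1) = 0, and ρ_n converges pointwise to the constant function 1 on [0,1). -/
/-!
Since `1 − r = 1/n − (r − r_n)`, the product `(1 − r) q_n(r)` telescopes to `1 − n³(r − r_n)³`,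
so `ρ_n(r) = 1 − n³ ((r − r_n)⁺)³` on all of `ℝ`. The cube of the positive part is `C²`, which
gives the regularity, and for fixed `r < 1` eventually `r ≤ r_n`, so `ρ_n(r) = 1` for large `n`.
-/

open Filter Topology

/-- The quadratic polynomial `q_n(r) = n³(r − r_n)² + n²(r − r_n) + n` with `r_n = 1 − 1/n`. -/
noncomputable def qn (n : ℕ) (r : ℝ) : ℝ :=
  (n : ℝ) ^ 3 * (r - (1 - 1 / (n : ℝ))) ^ 2 + (n : ℝ) ^ 2 * (r - (1 - 1 / (n : ℝ))) + (n : ℝ)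

/-- The radial profile `ρ_n`: equal to `1` for `r ≤ r_n = 1 − 1/n` and to
`(1−r)q_n(r)` for `r > r_n`. -/
noncomputable def rhon (n : ℕ) (r : ℝ) : ℝ :=
  if r ≤ 1 - 1 / (n : ℝ) then 1 else (1 - r) * qn n r

theorem hasDerivAt_max_zero_pow (k : ℕ) (x : ℝ) :
    HasDerivAt (fun y : ℝ => max y 0 ^ (k + 2)) ((k + 2) * max x 0 ^ (k + 1)) x := by
  rcases lt_trichotomy x 0 with hx | rfl | hx
  · have hzero : (fun y : ℝ => max y 0 ^ (k + 2)) =ᶠ[𝓝 x] fun _ => 0 := by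
      filter_upwards [Iio_mem_nhds hx] with y hy
      simp [max_eq_right (Set.mem_Iio.mp hy).le]
    simpa [max_eq_right hx.le] using (hasDerivAt_const x (0 : ℝ)).congr_of_eventuallyEq hzero
  · have hbound : (fun y : ℝ => max y 0 ^ (k + 2)) =O[𝓝 0] fun y => ‖y - 0‖ ^ (k + 2) := by
      refine Asymptotics.IsBigO.of_bound 1 (Eventually.of_forall fun y => ?_)
      rw [one_mul, norm_pow, norm_pow, norm_norm, sub_zero, Real.norm_eq_abs, Real.norm_eq_abs]
      have hmax : |max y 0| ≤ |y| := by
        rw [abs_of_nonneg (le_max_right y 0)]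
        exact max_le (le_abs_self y) (abs_nonneg y)
      exact pow_le_pow_left₀ (abs_nonneg _) hmax _
    simpa using (hbound.hasFDerivAt (by omega)).hasDerivAt
  · have hpow : (fun y : ℝ => max y 0 ^ (k + 2)) =ᶠ[𝓝 x] fun y => y ^ (k + 2) := by
      filter_upwards [Ioi_mem_nhds hx] with y hy
      rw [max_eq_left (Set.mem_Ioi.mp hy).le]
    simpa [max_eq_left hx.le] using (hasDerivAt_pow (k + 2) x).congr_of_eventuallyEq hpow

theorem contDiff_max_zero_pow (n : ℕ) : ContDiff ℝ n fun y : ℝ => max y 0 ^ (n + 1) := by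
  induction n with
  | zero => simpa using continuous_id.max continuous_const
  | succ n ih =>
    rw [Nat.cast_succ, contDiff_succ_iff_deriv]
    refine ⟨fun x => (hasDerivAt_max_zero_pow n x).differentiableAt, by simp, ?_⟩
    rw [funext fun x => (hasDerivAt_max_zero_pow n x).deriv]
    exact contDiff_const.mul ih

theorem rhon_eq_one_sub_max_pow {n : ℕ} (hn : n ≠ 0) (r : ℝ) :
    rhon n r = 1 - (n : ℝ) ^ 3 * max (r - (1 - 1 / (n : ℝ))) 0 ^ 3 := by
  have hn' : (n : ℝ) ≠ 0 := Nat.cast_ne_zero.mpr hn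
  unfold rhon qn
  split_ifs with h
  · rw [max_eq_right (by linarith)]
    ring
  · rw [max_eq_left (by linarith)]
    field_simp
    ring

theorem contDiff_rhon {n : ℕ} (hn : n ≠ 0) : ContDiff ℝ 2 (rhon n) := by
  rw [funext (rhon_eq_one_sub_max_pow hn)]
  exact contDiff_const.sub <| contDiff_const.mul <|
    (contDiff_max_zero_pow 2).comp (contDiff_id.sub contDiff_const)

theorem rhon_one {n : ℕ} (hn : n ≠ 0) : rhon n 1 = 0 := by
  have : (0 : ℝ) < 1 / n := by positivity
  rw [rhon, if_neg (by linarith), sub_self, zero_mul]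

theorem rhon_eventually_eq_one {r : ℝ} (hr : r < 1) : ∀ᶠ n : ℕ in atTop, rhon n r = 1 := by
  filter_upwards [tendsto_one_div_atTop_nhds_zero_nat.eventually (eventually_lt_nhds (sub_pos.mpr hr))]
    with n hn
  rw [rhon, if_pos (by linarith)]

/-- For each `n ≥ 1`, `ρ_n` is twice continuously differentiable on `[0,1)`, continuous
on `[0,1]`, satisfies `ρ_n(1) = 0`, and `ρ_n` converges pointwise to `1` on `[0,1)`. -/
theorem stmt_4 :
    (∀ n : ℕ, 1 ≤ n →
      ContDiffOn ℝ 2 (rhon n) (Set.Ico (0 : ℝ) 1) ∧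
      ContinuousOn (rhon n) (Set.Icc (0 : ℝ) 1) ∧
      rhon n 1 = 0) ∧
    ∀ r ∈ Set.Ico (0 : ℝ) 1, Tendsto (fun n : ℕ => rhon n r) atTop (𝓝 1) := by
  refine ⟨fun n hn => ?_, fun r hr => ?_⟩
  · have hn0 : n ≠ 0 := Nat.one_le_iff_ne_zero.mp hn
    exact ⟨(contDiff_rhon hn0).contDiffOn, (contDiff_rhon hn0).continuous.continuousOn,
      rhon_one hn0⟩
  · exact tendsto_const_nhds.congr' ((rhon_eventually_eq_one hr.2).mono fun _ h => h.symm)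
end

section
/- Let Ω = B_1(0) ⊂ ℝ^d and let u be a generalized solution of the PDE (1−|x|)² Δu + τ(x)·Du = 0 in Ω, u = 0 on ∂Ω, where τ ∈ C¹(Ω; ℝ^d) satisfies τ(x) ⊥ x for all x. If u ∈ C²(Ω) ∩ C(Ω̄), then u ≡ 0. -/
/-!
The operator `(1 - ‖x‖)² Δ + τ · ∇` is uniformly elliptic, with bounded drift, on every closed
ball `B_r` with `r < 1`, so the weak maximum principle holds there: adding the barrier
`ε e^{c x₁}` with `c` large turns a subsolution into a strict one, and a strict subsolution has no
interior maximum since there `∇w = 0` and `Δw ≤ 0`. Hence `u ≤ max_{∂B_r} u`; letting `r → 1`,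
uniform continuity of `u` on the closed unit ball and `u = 0` on the unit sphere give `u ≤ 0`.
The same applies to `-u`.
-/

open Filter Topology Metric
open scoped RealInnerProductSpace

/-- The Laplacian of `u`, written as the sum of the second partial derivatives along the
standard coordinate directions of `ℝ^d`. -/
noncomputable def lap {d : ℕ} (u : EuclideanSpace ℝ (Fin d) → ℝ)
    (x : EuclideanSpace ℝ (Fin d)) : ℝ :=
  ∑ i : Fin d,
    fderiv ℝ (fun y => fderiv ℝ u y (EuclideanSpace.single i 1)) x (EuclideanSpace.single i 1)

theorem IsLocalMax.deriv_deriv_nonpos {f : ℝ → ℝ} {a : ℝ} (h : IsLocalMax f a)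
    (hc : ContinuousAt f a) : deriv (deriv f) a ≤ 0 := by
  by_contra! hpos
  have hconst : f =ᶠ[𝓝 a] fun _ => f a := by
    filter_upwards [h, isLocalMin_of_deriv_deriv_pos hpos h.deriv_eq_zero hc] with x hmax hmin
    exact le_antisymm hmax hmin
  have : deriv f =ᶠ[𝓝 a] fun _ => 0 := by
    simpa using hconst.deriv
  simp [this.deriv_eq] at hpos

theorem IsLocalMax.fderiv_fderiv_apply_nonpos {E : Type*} [NormedAddCommGroup E]
    [NormedSpace ℝ E] {w : E → ℝ} {a : E} (h : IsLocalMax w a) (hw : ContDiffAt ℝ 2 w a)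
    (v : E) : fderiv ℝ (fun y => fderiv ℝ w y v) a v ≤ 0 := by
  set γ : ℝ → E := fun t => a + t • v
  have hγ : ∀ t, HasDerivAt γ v t := fun t => by
    simpa [γ] using ((hasDerivAt_id t).smul_const v).const_add a
  have hγ0 : γ 0 = a := by simp [γ]
  have hγa : Tendsto γ (𝓝 0) (𝓝 a) := hγ0 ▸ (hγ 0).continuousAt.tendsto
  have hderiv : deriv (w ∘ γ) =ᶠ[𝓝 0] fun t => fderiv ℝ w (γ t) v := by
    filter_upwards [hγa.eventually (hw.eventually (by norm_num))] with t ht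
    exact ((ht.differentiableAt (by norm_num)).hasFDerivAt.comp_hasDerivAt t (hγ t)).deriv
  have hψ : DifferentiableAt ℝ (fun y => fderiv ℝ w y v) a :=
    ((hw.fderiv_right (m := 1) (by norm_num)).differentiableAt (by norm_num)).clm_apply
      (differentiableAt_const v)
  have h2 := hψ.hasFDerivAt.comp_hasDerivAt_of_eq 0 (hγ 0) hγ0.symm
  rw [← h2.deriv]
  change deriv (fun t => fderiv ℝ w (γ t) v) 0 ≤ 0
  rw [← hderiv.deriv_eq]
  refine IsLocalMax.deriv_deriv_nonpos ?_ ?_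
  · exact IsLocalMax.comp_continuous (by rwa [hγ0]) (hγ 0).continuousAt
  · exact hw.continuousAt.comp_of_eq (hγ 0).continuousAt hγ0

section Laplacian

variable {d : ℕ}

theorem IsLocalMax.lap_nonpos {w : EuclideanSpace ℝ (Fin d) → ℝ} {x : EuclideanSpace ℝ (Fin d)}
    (h : IsLocalMax w x) (hw : ContDiffAt ℝ 2 w x) : lap w x ≤ 0 :=
  Finset.sum_nonpos fun _ _ => h.fderiv_fderiv_apply_nonpos hw _

theorem lap_add {u v : EuclideanSpace ℝ (Fin d) → ℝ} {x : EuclideanSpace ℝ (Fin d)}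
    (hu : ContDiffAt ℝ 2 u x) (hv : ContDiffAt ℝ 2 v x) :
    lap (u + v) x = lap u x + lap v x := by
  rw [lap, lap, lap, ← Finset.sum_add_distrib]
  refine Finset.sum_congr rfl fun i _ => ?_
  have hfd : (fun y => fderiv ℝ (u + v) y (EuclideanSpace.single i 1)) =ᶠ[𝓝 x]
      (fun y => fderiv ℝ u y (EuclideanSpace.single i 1)) +
        fun y => fderiv ℝ v y (EuclideanSpace.single i 1) := by
    filter_upwards [hu.eventually (by norm_num), hv.eventually (by norm_num)] with y hu' hv'
    rw [fderiv_add (hu'.differentiableAt (by norm_num)) (hv'.differentiableAt (by norm_num))]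
    rfl
  have hdiff : ∀ {f : EuclideanSpace ℝ (Fin d) → ℝ}, ContDiffAt ℝ 2 f x →
      DifferentiableAt ℝ (fun y => fderiv ℝ f y (EuclideanSpace.single i 1)) x := fun hf =>
    ((hf.fderiv_right (m := 1) (by norm_num)).differentiableAt (by norm_num)).clm_apply
      (differentiableAt_const _)
  rw [hfd.fderiv_eq, fderiv_add (hdiff hu) (hdiff hv)]
  rfl

theorem lap_const_smul (c : ℝ) (v : EuclideanSpace ℝ (Fin d) → ℝ) (x : EuclideanSpace ℝ (Fin d)) :
    lap (c • v) x = c * lap v x := by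
  simp only [lap, fderiv_const_smul_field, Finset.mul_sum]
  refine Finset.sum_congr rfl fun i _ => ?_
  rw [show (fun y => (c • fderiv ℝ v) y (EuclideanSpace.single i 1)) =
    c • fun y => fderiv ℝ v y (EuclideanSpace.single i 1) from rfl, fderiv_const_smul_field]
  rfl

theorem lap_neg (v : EuclideanSpace ℝ (Fin d) → ℝ) (x : EuclideanSpace ℝ (Fin d)) :
    lap (-v) x = -lap v x := by
  simpa using lap_const_smul (-1) v x

noncomputable def expCoord (c : ℝ) (i : Fin d) (x : EuclideanSpace ℝ (Fin d)) : ℝ :=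
  Real.exp (c * x i)

theorem contDiff_expCoord (c : ℝ) (i : Fin d) : ContDiff ℝ 2 (expCoord c i) :=
  Real.contDiff_exp.comp (contDiff_const.mul (EuclideanSpace.proj (𝕜 := ℝ) i).contDiff)

theorem fderiv_expCoord_apply (c : ℝ) (i : Fin d) (x y : EuclideanSpace ℝ (Fin d)) :
    fderiv ℝ (expCoord c i) x y = c * expCoord c i x * y i := by
  have h : HasFDerivAt (expCoord c i) (Real.exp (c * x i) • c • EuclideanSpace.proj i) x :=
    (Real.hasDerivAt_exp (c * x i)).comp_hasFDerivAt x
      (((EuclideanSpace.proj (𝕜 := ℝ) i).hasFDerivAt (x := x)).const_smul c)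
  rw [h.fderiv]
  simp [expCoord]
  ring

theorem lap_expCoord (c : ℝ) (i : Fin d) (x : EuclideanSpace ℝ (Fin d)) :
    lap (expCoord c i) x = c ^ 2 * expCoord c i x := by
  have hdir : ∀ j : Fin d, (fun y => fderiv ℝ (expCoord c i) y (EuclideanSpace.single j 1)) =
      (c * (EuclideanSpace.single j (1 : ℝ)) i) • expCoord c i := by
    intro j; ext y; simp only [fderiv_expCoord_apply, Pi.smul_apply, smul_eq_mul]; ring
  calc lap (expCoord c i) x = ∑ j : Fin d, c * (EuclideanSpace.single j (1 : ℝ)) i *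
        (c * expCoord c i x * (EuclideanSpace.single j (1 : ℝ)) i) := by
        refine Finset.sum_congr rfl fun j _ => ?_
        rw [hdir j, fderiv_const_smul_field, Pi.smul_apply, smul_apply, fderiv_expCoord_apply,
          smul_eq_mul]
    _ = c ^ 2 * expCoord c i x := by
        simp [PiLp.single_apply]
        ring

theorem lap_add_smul_expCoord {v : EuclideanSpace ℝ (Fin d) → ℝ} {x : EuclideanSpace ℝ (Fin d)}
    (hv : ContDiffAt ℝ 2 v x) (k c : ℝ) (i : Fin d) :
    lap (v + k • expCoord c i) x = lap v x + k * (c ^ 2 * expCoord c i x) := by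
  have hk : ContDiff ℝ 2 (k • expCoord c i) := (contDiff_expCoord c i).const_smul k
  rw [lap_add hv hk.contDiffAt, lap_const_smul, lap_expCoord]

theorem inner_gradient_add_smul_expCoord {v : EuclideanSpace ℝ (Fin d) → ℝ}
    {x : EuclideanSpace ℝ (Fin d)} (hv : DifferentiableAt ℝ v x) (b : EuclideanSpace ℝ (Fin d))
    (k c : ℝ) (i : Fin d) :
    ⟪b, gradient (v + k • expCoord c i) x⟫ =
      ⟪b, gradient v x⟫ + k * (c * expCoord c i x * b i) := by
  have hk : ContDiff ℝ 2 (k • expCoord c i) := (contDiff_expCoord c i).const_smul k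
  simp only [inner_gradient_right, conj_trivial]
  rw [fderiv_add hv (hk.differentiable (by norm_num) x),
    fderiv_const_smul_field, add_apply, Pi.smul_apply, smul_apply, fderiv_expCoord_apply,
    smul_eq_mul]

end Laplacian

section MaximumPrinciple

variable {d : ℕ} {K : Set (EuclideanSpace ℝ (Fin d))} {a : EuclideanSpace ℝ (Fin d) → ℝ}
  {b : EuclideanSpace ℝ (Fin d) → EuclideanSpace ℝ (Fin d)} {v : EuclideanSpace ℝ (Fin d) → ℝ}

theorem exists_mem_frontier_isMaxOn_of_pos (hK : IsCompact K) (hne : K.Nonempty)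
    (ha : ∀ x ∈ interior K, 0 ≤ a x) (hvc : ContinuousOn v K)
    (hv2 : ∀ x ∈ interior K, ContDiffAt ℝ 2 v x)
    (hLv : ∀ x ∈ interior K, 0 < a x * lap v x + ⟪b x, gradient v x⟫) :
    ∃ y ∈ frontier K, IsMaxOn v K y := by
  obtain ⟨y, hyK, hmax⟩ := hK.exists_isMaxOn hne hvc
  refine ⟨y, ⟨subset_closure hyK, fun hy => ?_⟩, hmax⟩
  have hloc : IsLocalMax v y := hmax.isLocalMax (mem_interior_iff_mem_nhds.mp hy)
  have hgrad : gradient v y = 0 := by simp [gradient, hloc.fderiv_eq_zero]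
  have hLv_y := hLv y hy
  rw [hgrad, inner_zero_right, add_zero] at hLv_y
  exact (mul_nonpos_of_nonneg_of_nonpos (ha y hy) (hloc.lap_nonpos (hv2 y hy))).not_gt hLv_y

theorem exists_mem_frontier_le_add (hd : 0 < d) (hK : IsCompact K) (hne : K.Nonempty) {α M : ℝ}
    (hα : 0 < α) (ha : ∀ x ∈ interior K, α ≤ a x) (hb : ∀ x ∈ interior K, ‖b x‖ ≤ M)
    (hvc : ContinuousOn v K) (hv2 : ∀ x ∈ interior K, ContDiffAt ℝ 2 v x)
    (hLv : ∀ x ∈ interior K, 0 ≤ a x * lap v x + ⟪b x, gradient v x⟫) {ε : ℝ} (hε : 0 < ε) :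
    ∃ y ∈ frontier K, ∀ x ∈ K, v x ≤ v y + ε := by
  set i : Fin d := ⟨0, hd⟩
  -- `c` makes `a x * c + b x i ≥ 1`, so that `expCoord c i` is a strict subsolution.
  set c := (|M| + 1) / α
  have hc : 0 < c := by positivity
  obtain ⟨C, hC1, hC⟩ :=
    (hK.bddAbove_image (contDiff_expCoord c i).continuous.continuousOn).exists_ge 1
  have hk : 0 < ε / C := div_pos hε (one_pos.trans_le hC1)
  have hLw : ∀ x ∈ interior K, 0 < a x * lap (v + (ε / C) • expCoord c i) x +
      ⟪b x, gradient (v + (ε / C) • expCoord c i) x⟫ := by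
    intro x hx
    have hac : |M| + 1 ≤ a x * c :=
      calc |M| + 1 = α * c := (mul_div_cancel₀ _ hα.ne').symm
        _ ≤ a x * c := mul_le_mul_of_nonneg_right (ha x hx) hc.le
    have hbi : -|M| ≤ b x i := by
      have := (PiLp.norm_apply_le (b x) i).trans ((hb x hx).trans (le_abs_self M))
      rw [Real.norm_eq_abs] at this
      linarith [neg_abs_le (b x i)]
    have hbarrier : 0 < ε / C * c * expCoord c i x := mul_pos (mul_pos hk hc) (Real.exp_pos _)
    rw [lap_add_smul_expCoord (hv2 x hx),
      inner_gradient_add_smul_expCoord ((hv2 x hx).differentiableAt (by norm_num))]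
    nlinarith [hLv x hx]
  obtain ⟨y, hy, hmax⟩ := exists_mem_frontier_isMaxOn_of_pos hK hne
    (fun x hx => hα.le.trans (ha x hx))
    (hvc.add ((contDiff_expCoord c i).continuous.continuousOn.const_smul _))
    (fun x hx => (hv2 x hx).add ((contDiff_expCoord c i).const_smul _).contDiffAt) hLw
  refine ⟨y, hy, fun x hx => ?_⟩
  have hwxy : v x + ε / C * expCoord c i x ≤ v y + ε / C * expCoord c i y := hmax hx
  have hhx : 0 < ε / C * expCoord c i x := mul_pos hk (Real.exp_pos _)
  have hhy : ε / C * expCoord c i y ≤ ε :=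
    (mul_le_mul_of_nonneg_left (hC _ ⟨y, hK.isClosed.frontier_subset hy, rfl⟩) hk.le).trans_eq
      (div_mul_cancel₀ ε (one_pos.trans_le hC1).ne')
  linarith

theorem exists_mem_frontier_isMaxOn (hd : 0 < d) (hK : IsCompact K) (hne : K.Nonempty) {α M : ℝ}
    (hα : 0 < α) (ha : ∀ x ∈ interior K, α ≤ a x) (hb : ∀ x ∈ interior K, ‖b x‖ ≤ M)
    (hvc : ContinuousOn v K) (hv2 : ∀ x ∈ interior K, ContDiffAt ℝ 2 v x)
    (hLv : ∀ x ∈ interior K, 0 ≤ a x * lap v x + ⟪b x, gradient v x⟫) :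
    ∃ y ∈ frontier K, IsMaxOn v K y := by
  have hle_add := fun ε (hε : 0 < ε) =>
    exists_mem_frontier_le_add hd hK hne hα ha hb hvc hv2 hLv hε
  have hfrontier : frontier K ⊆ K := hK.isClosed.frontier_subset
  obtain ⟨y₀, hy₀, hy₀max⟩ := (hK.of_isClosed_subset isClosed_frontier hfrontier).exists_isMaxOn
    (let ⟨y, hy, _⟩ := hle_add 1 one_pos; ⟨y, hy⟩) (hvc.mono hfrontier)
  refine ⟨y₀, hy₀, isMaxOn_iff.mpr fun x hx => le_of_forall_pos_le_add fun ε hε => ?_⟩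
  obtain ⟨y, hy, hvy⟩ := hle_add ε hε
  exact (hvy x hx).trans (add_le_add_left (hy₀max hy) ε)

end MaximumPrinciple

theorem eventually_forall_mem_sphere_lt {E : Type*} [NormedAddCommGroup E] [NormedSpace ℝ E]
    [ProperSpace E] {v : E → ℝ} (hvc : ContinuousOn v (closedBall 0 1))
    (hbdy : ∀ x ∈ sphere (0 : E) 1, v x ≤ 0) {δ : ℝ} (hδ : 0 < δ) :
    ∀ᶠ r in 𝓝[<] (1 : ℝ), ∀ y ∈ sphere (0 : E) r, v y < δ := by
  obtain ⟨η, hη, hvη⟩ := Metric.uniformContinuousOn_iff.mp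
    ((isCompact_closedBall (0 : E) 1).uniformContinuousOn_of_continuous hvc) δ hδ
  filter_upwards [Ioo_mem_nhdsLT (show max (1 - η) 0 < 1 by simp [hη])] with r hr y hy
  obtain ⟨hr0, hrη⟩ : 0 < r ∧ 1 - η < r := by simpa [and_comm] using hr.1
  rw [mem_sphere_zero_iff_norm] at hy
  have hz : r⁻¹ • y ∈ sphere (0 : E) 1 := by
    simp [norm_smul, hy, abs_of_pos hr0, hr0.ne']
  have hdist : dist (r⁻¹ • y) y < η := by
    rw [dist_eq_norm, show r⁻¹ • y - y = (r⁻¹ - 1) • y by rw [sub_smul, one_smul], norm_smul,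
      hy, Real.norm_eq_abs, abs_of_nonneg (by linarith [one_le_inv_iff₀.mpr ⟨hr0, hr.2.le⟩]),
      sub_mul, inv_mul_cancel₀ hr0.ne', one_mul]
    linarith
  have := hvη _ (sphere_subset_closedBall hz) y (mem_closedBall_zero_iff.mpr (hy.trans_le hr.2.le))
    hdist
  rw [Real.dist_eq, abs_sub_lt_iff] at this
  linarith [hbdy _ hz]

theorem nonpos_on_closedBall_of_subsolution {d : ℕ} (hd : 0 < d)
    {τ : EuclideanSpace ℝ (Fin d) → EuclideanSpace ℝ (Fin d)}
    (hτ : ContinuousOn τ (ball 0 1)) {v : EuclideanSpace ℝ (Fin d) → ℝ}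
    (hv2 : ContDiffOn ℝ 2 v (ball 0 1)) (hvc : ContinuousOn v (closedBall 0 1))
    (hLv : ∀ x ∈ ball (0 : EuclideanSpace ℝ (Fin d)) 1,
      0 ≤ (1 - ‖x‖) ^ 2 * lap v x + ⟪τ x, gradient v x⟫)
    (hbdy : ∀ x ∈ sphere (0 : EuclideanSpace ℝ (Fin d)) 1, v x ≤ 0)
    {x : EuclideanSpace ℝ (Fin d)} (hx : x ∈ closedBall 0 1) : v x ≤ 0 := by
  rcases (mem_closedBall_zero_iff.mp hx).eq_or_lt with hx1 | hx1
  · exact hbdy x (mem_sphere_zero_iff_norm.mpr hx1)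
  refine le_of_forall_pos_le_add fun δ hδ => ?_
  obtain ⟨r, hvr, hxr, hr1⟩ :=
    ((eventually_forall_mem_sphere_lt hvc hbdy hδ).and (Ioo_mem_nhdsLT hx1)).exists
  have hr0 : 0 < r := (norm_nonneg x).trans_lt hxr
  have hsub : closedBall (0 : EuclideanSpace ℝ (Fin d)) r ⊆ ball 0 1 := closedBall_subset_ball hr1
  have hint : interior (closedBall (0 : EuclideanSpace ℝ (Fin d)) r) ⊆ ball 0 1 :=
    interior_subset.trans hsub
  obtain ⟨M, hM⟩ := (isCompact_closedBall _ r).exists_bound_of_continuousOn (hτ.mono hsub)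
  have hcoeff : ∀ z ∈ interior (closedBall (0 : EuclideanSpace ℝ (Fin d)) r),
      (1 - r) ^ 2 ≤ (1 - ‖z‖) ^ 2 := fun z hz => by
    rw [interior_closedBall _ hr0.ne', mem_ball_zero_iff] at hz
    exact pow_le_pow_left₀ (by linarith) (by linarith) 2
  obtain ⟨y, hy, hmax⟩ := exists_mem_frontier_isMaxOn hd (isCompact_closedBall _ r)
    (nonempty_closedBall.mpr hr0.le) (by nlinarith) hcoeff (fun z hz => hM z (interior_subset hz))
    (hvc.mono (closedBall_subset_closedBall hr1.le))
    (fun z hz => hv2.contDiffAt (isOpen_ball.mem_nhds (hint hz))) (fun z hz => hLv z (hint hz))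
  rw [frontier_closedBall _ hr0.ne'] at hy
  rw [zero_add]
  exact (hmax (mem_closedBall_zero_iff.mpr hxr.le)).trans (hvr y hy).le

theorem stmt_18_general (d : ℕ) (hd : 1 ≤ d)
    (u : EuclideanSpace ℝ (Fin d) → ℝ)
    (τ : EuclideanSpace ℝ (Fin d) → EuclideanSpace ℝ (Fin d))
    (hτ : ContDiffOn ℝ 1 τ (ball (0 : EuclideanSpace ℝ (Fin d)) 1))
    (hu2 : ContDiffOn ℝ 2 u (ball (0 : EuclideanSpace ℝ (Fin d)) 1))
    (huc : ContinuousOn u (closedBall (0 : EuclideanSpace ℝ (Fin d)) 1))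
    (hpde : ∀ x ∈ ball (0 : EuclideanSpace ℝ (Fin d)) 1,
      (1 - ‖x‖) ^ 2 * lap u x + ⟪τ x, gradient u x⟫ = 0)
    (hbdy : ∀ x ∈ sphere (0 : EuclideanSpace ℝ (Fin d)) 1, u x = 0) :
    ∀ x ∈ closedBall (0 : EuclideanSpace ℝ (Fin d)) 1, u x = 0 := by
  intro x hx
  have hpde_neg : ∀ y ∈ ball (0 : EuclideanSpace ℝ (Fin d)) 1,
      0 ≤ (1 - ‖y‖) ^ 2 * lap (-u) y + ⟪τ y, gradient (-u) y⟫ := fun y hy => by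
    have hgrad : gradient (-u) y = -gradient u y := by simp only [gradient, fderiv_neg, map_neg]
    rw [lap_neg, hgrad, inner_neg_right]
    linarith [hpde y hy]
  refine le_antisymm ?_ ?_
  · exact nonpos_on_closedBall_of_subsolution hd hτ.continuousOn hu2 huc
      (fun y hy => (hpde y hy).ge) (fun y hy => (hbdy y hy).le) hx
  · simpa using nonpos_on_closedBall_of_subsolution hd hτ.continuousOn hu2.neg huc.neg hpde_neg
      (fun y hy => by simp [hbdy y hy]) hx

/-- Let `Ω = B_1(0) ⊂ ℝ^d` and let `u ∈ C²(Ω) ∩ C(Ω̄)` solve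
`(1−|x|)²Δu + τ(x)·Du = 0` in `Ω` with `u = 0` on `∂Ω`, where `τ ∈ C¹(Ω; ℝ^d)` satisfies
`τ(x) ⊥ x` for all `x`. Then `u ≡ 0`. -/
theorem stmt_18 (d : ℕ) (hd : 1 ≤ d)
    (u : EuclideanSpace ℝ (Fin d) → ℝ)
    (τ : EuclideanSpace ℝ (Fin d) → EuclideanSpace ℝ (Fin d))
    (hτ : ContDiffOn ℝ 1 τ (ball (0 : EuclideanSpace ℝ (Fin d)) 1))
    (hτperp : ∀ x, ⟪τ x, x⟫ = 0)
    (hu2 : ContDiffOn ℝ 2 u (ball (0 : EuclideanSpace ℝ (Fin d)) 1))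
    (huc : ContinuousOn u (closedBall (0 : EuclideanSpace ℝ (Fin d)) 1))
    (hpde : ∀ x ∈ ball (0 : EuclideanSpace ℝ (Fin d)) 1,
      (1 - ‖x‖) ^ 2 * lap u x + ⟪τ x, gradient u x⟫ = 0)
    (hbdy : ∀ x ∈ sphere (0 : EuclideanSpace ℝ (Fin d)) 1, u x = 0) :
    ∀ x ∈ closedBall (0 : EuclideanSpace ℝ (Fin d)) 1, u x = 0 :=
  stmt_18_general d hd u τ hτ hu2 huc hpde hbdy
end
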